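/- Let ω₁, ω₂, ω₃ be the one-forms ω₁ = (λ/2 + 1/(2λ) - m) dx + (u m + (λ/2) u - u/(2λ) - 1/2 - λ²/2) dt, ω₂ = -u_x dt, ω₃ = (m + 1/(2λ) - λ/2) dx + (λ²/2 - 1/2 - u/(2λ) - (λ/2) u - u m) dt, where m = u - u_{xx} and λ ≠ 0. Then dω₁ - ω₃∧ω₂ = (m_t + 2u_x m + u m_x) dx∧dt, dω₂ - ω₁∧ω₃ = 0, and dω₃ - ω₁∧ω₂ = -(m_t + 2u_x m + u m_x) dx∧dt. -/

import Mathlib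

/-- Partial derivative in the first (space) variable. -/
noncomputable def pX (f : ℝ → ℝ → ℝ) : ℝ → ℝ → ℝ := fun x t => deriv (fun x' => f x' t) x

/-- Partial derivative in the second (time) variable. -/
noncomputable def pT (f : ℝ → ℝ → ℝ) : ℝ → ℝ → ℝ := fun x t => deriv (fun t' => f x t') t

/-- Momentum `m = u - u_{xx}`. -/
noncomputable def chMom (u : ℝ → ℝ → ℝ) : ℝ → ℝ → ℝ := fun x t => u x t - pX (pX u) x t

/-- `dx`-coefficient of `ω₁`. -/
noncomputable def f11 (lam : ℝ) (u : ℝ → ℝ → ℝ) : ℝ → ℝ → ℝ :=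
  fun x t => lam / 2 + 1 / (2 * lam) - chMom u x t

/-- `dt`-coefficient of `ω₁`. -/
noncomputable def f12 (lam : ℝ) (u : ℝ → ℝ → ℝ) : ℝ → ℝ → ℝ :=
  fun x t => u x t * chMom u x t + (lam / 2) * u x t - u x t / (2 * lam) - 1 / 2 - lam ^ 2 / 2

/-- `dx`-coefficient of `ω₂`. -/
noncomputable def f21 (lam : ℝ) (u : ℝ → ℝ → ℝ) : ℝ → ℝ → ℝ := fun _ _ => 0

/-- `dt`-coefficient of `ω₂`. -/
noncomputable def f22 (lam : ℝ) (u : ℝ → ℝ → ℝ) : ℝ → ℝ → ℝ := fun x t => -pX u x t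

/-- `dx`-coefficient of `ω₃`. -/
noncomputable def f31 (lam : ℝ) (u : ℝ → ℝ → ℝ) : ℝ → ℝ → ℝ :=
  fun x t => chMom u x t + 1 / (2 * lam) - lam / 2

/-- `dt`-coefficient of `ω₃`. -/
noncomputable def f32 (lam : ℝ) (u : ℝ → ℝ → ℝ) : ℝ → ℝ → ℝ :=
  fun x t => lam ^ 2 / 2 - 1 / 2 - u x t / (2 * lam) - (lam / 2) * u x t - u x t * chMom u x t

section Aux

variable {g : ℝ → ℝ → ℝ}

lemma hasDerivAt_slice_pX {x t : ℝ}
    (h : DifferentiableAt ℝ (fun p : ℝ × ℝ => g p.1 p.2) (x, t)) :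
    HasDerivAt (fun x' => g x' t)
      (fderiv ℝ (fun p : ℝ × ℝ => g p.1 p.2) (x, t) (1, 0)) x := by
  have h1 : HasDerivAt (fun x' : ℝ => ((x', t) : ℝ × ℝ)) ((1 : ℝ), (0 : ℝ)) x :=
    (hasDerivAt_id x).prodMk (hasDerivAt_const x t)
  exact h.hasFDerivAt.comp_hasDerivAt x h1

lemma hasDerivAt_slice_pT {x t : ℝ}
    (h : DifferentiableAt ℝ (fun p : ℝ × ℝ => g p.1 p.2) (x, t)) :
    HasDerivAt (fun t' => g x t')
      (fderiv ℝ (fun p : ℝ × ℝ => g p.1 p.2) (x, t) (0, 1)) t := by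
  have h1 : HasDerivAt (fun t' : ℝ => ((x, t') : ℝ × ℝ)) ((0 : ℝ), (1 : ℝ)) t :=
    (hasDerivAt_const t x).prodMk (hasDerivAt_id t)
  exact h.hasFDerivAt.comp_hasDerivAt t h1

lemma diffAt_sliceX {x t : ℝ}
    (h : DifferentiableAt ℝ (fun p : ℝ × ℝ => g p.1 p.2) (x, t)) :
    DifferentiableAt ℝ (fun x' => g x' t) x :=
  (hasDerivAt_slice_pX h).differentiableAt

lemma diffAt_sliceT {x t : ℝ}
    (h : DifferentiableAt ℝ (fun p : ℝ × ℝ => g p.1 p.2) (x, t)) :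
    DifferentiableAt ℝ (fun t' => g x t') t :=
  (hasDerivAt_slice_pT h).differentiableAt

lemma contDiff_pX {n : ℕ∞} (h : ContDiff ℝ (n + 1) (fun p : ℝ × ℝ => g p.1 p.2)) :
    ContDiff ℝ n (fun p : ℝ × ℝ => pX g p.1 p.2) := by
  have hd : ContDiff ℝ n
      (fun p : ℝ × ℝ => fderiv ℝ (fun q : ℝ × ℝ => g q.1 q.2) p ((1 : ℝ), (0 : ℝ))) :=
    (h.fderiv_right (le_refl _)).clm_apply contDiff_const
  have heq : ∀ p : ℝ × ℝ,
      pX g p.1 p.2 = fderiv ℝ (fun q : ℝ × ℝ => g q.1 q.2) p ((1 : ℝ), (0 : ℝ)) := by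
    rintro ⟨x, t⟩
    exact (hasDerivAt_slice_pX
      ((h.differentiable (by simp)) (x, t))).deriv
  rw [show (fun p : ℝ × ℝ => pX g p.1 p.2) = _ from funext heq]
  exact hd

end Aux

/-- Structure-equation computation for the Camassa–Holm one-forms, written at the level of
`dx∧dt`-coefficients: for `ωᵢ = fᵢ₁ dx + fᵢ₂ dt` one has `dωᵢ = (∂ₓfᵢ₂ - ∂ₜfᵢ₁) dx∧dt` and
`ωᵢ∧ωⱼ = (fᵢ₁ fⱼ₂ - fⱼ₁ fᵢ₂) dx∧dt`.  The claims are
`dω₁ - ω₃∧ω₂ = (m_t + 2u_x m + u m_x) dx∧dt`, `dω₂ - ω₁∧ω₃ = 0`,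
`dω₃ - ω₁∧ω₂ = -(m_t + 2u_x m + u m_x) dx∧dt`. -/
theorem stmt12 (lam : ℝ) (hlam : lam ≠ 0) (u : ℝ → ℝ → ℝ)
    (hu : ContDiff ℝ 4 (fun p : ℝ × ℝ => u p.1 p.2)) :
    ∀ x t : ℝ,
      (pX (f12 lam u) x t - pT (f11 lam u) x t)
          - (f31 lam u x t * f22 lam u x t - f21 lam u x t * f32 lam u x t)
        = pT (chMom u) x t + 2 * pX u x t * chMom u x t + u x t * pX (chMom u) x t ∧
      (pX (f22 lam u) x t - pT (f21 lam u) x t)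
          - (f11 lam u x t * f32 lam u x t - f31 lam u x t * f12 lam u x t) = 0 ∧
      (pX (f32 lam u) x t - pT (f31 lam u) x t)
          - (f11 lam u x t * f22 lam u x t - f21 lam u x t * f12 lam u x t)
        = -(pT (chMom u) x t + 2 * pX u x t * chMom u x t + u x t * pX (chMom u) x t) := by
  intro x t
  have hu4 : ContDiff ℝ ((3 : ℕ∞) + 1) (fun p : ℝ × ℝ => u p.1 p.2) := by
    exact_mod_cast hu
  have hG1 : ContDiff ℝ 3 (fun p : ℝ × ℝ => pX u p.1 p.2) := contDiff_pX hu4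
  have hG1' : ContDiff ℝ ((2 : ℕ∞) + 1) (fun p : ℝ × ℝ => pX u p.1 p.2) := by
    exact_mod_cast hG1
  have hG2 : ContDiff ℝ 2 (fun p : ℝ × ℝ => pX (pX u) p.1 p.2) := contDiff_pX hG1'
  have hM : ContDiff ℝ 2 (fun p : ℝ × ℝ => chMom u p.1 p.2) :=
    (hu.of_le (by norm_num)).sub hG2
  have hMd : Differentiable ℝ (fun p : ℝ × ℝ => chMom u p.1 p.2) :=
    hM.differentiable (by norm_num)
  -- basic pointwise derivatives
  have hux : HasDerivAt (fun x' => u x' t) (pX u x t) x :=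
    (diffAt_sliceX ((hu.differentiable (by norm_num)) (x, t))).hasDerivAt
  have huxx : HasDerivAt (fun x' => pX u x' t) (pX (pX u) x t) x :=
    (diffAt_sliceX ((hG1.differentiable (by norm_num)) (x, t))).hasDerivAt
  have hmx : HasDerivAt (fun x' => chMom u x' t) (pX (chMom u) x t) x :=
    (diffAt_sliceX (hMd (x, t))).hasDerivAt
  have hmt : HasDerivAt (fun t' => chMom u x t') (pT (chMom u) x t) t :=
    (diffAt_sliceT (hMd (x, t))).hasDerivAt
  -- derivatives of the coefficient functions
  have e12 : pX (f12 lam u) x t =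
      (pX u x t * chMom u x t + u x t * pX (chMom u) x t) + lam / 2 * pX u x t
        - pX u x t / (2 * lam) :=
    (((((hux.mul hmx).add (hux.const_mul (lam / 2))).sub
      (hux.div_const (2 * lam))).sub_const (1 / 2)).sub_const (lam ^ 2 / 2)).deriv
  have e11 : pT (f11 lam u) x t = -pT (chMom u) x t :=
    (hmt.const_sub (lam / 2 + 1 / (2 * lam))).deriv
  have e22 : pX (f22 lam u) x t = -pX (pX u) x t := huxx.neg.deriv
  have e21 : pT (f21 lam u) x t = 0 := deriv_const _ _
  have e32 : pX (f32 lam u) x t =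
      -(pX u x t / (2 * lam)) - lam / 2 * pX u x t
        - (pX u x t * chMom u x t + u x t * pX (chMom u) x t) :=
    ((((hux.div_const (2 * lam)).const_sub (lam ^ 2 / 2 - 1 / 2)).sub
      (hux.const_mul (lam / 2))).sub (hux.mul hmx)).deriv
  have e31 : pT (f31 lam u) x t = pT (chMom u) x t :=
    ((hmt.add_const (1 / (2 * lam))).sub_const (lam / 2)).deriv
  have euxx : pX (pX u) x t = u x t - chMom u x t := by
    simp [chMom]
  rw [e12, e11, e22, e21, e32, e31]
  simp only [f11, f12, f21, f22, f31, f32]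
  rw [euxx]
  refine ⟨by ring, by field_simp; ring, by ring⟩
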